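/- arXiv:1710.00786 — 2 statements merged into one kernel-verified Lean document; each statement's English description precedes it below -/
import Mathlib

section
/- Let g ≥ 1, let π_g be the genus-g surface group, and let φ : π_g → F_h be a surjective group homomorphism onto a free group of finite rank h. Then there exists an element b ∈ ker φ whose image in the abelianization of π_g is nonzero. (In the paper this is established via the vanishing of the cup product on H¹ of a free group: the pullback φ*H¹(F_h;ℤ) is an isotropic subspace of H¹(S_g;ℤ) of dimension at most g, so some b with φ(b) = 1 is homologically nontrivial.) -/
/-!
If every element of `ker φ` were homologically trivial, every integral character of `π_g` would
factor through `φ`. Any two characters `u, v` of a free group lift to a homomorphism into the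
Heisenberg group (their cup product vanishes), so every pair of characters of `π_g` would lift
too. But under a lift of `(u, v)` the relator `∏ [aᵢ, bᵢ]` goes to the central element
`∑ᵢ (u aᵢ v bᵢ - u bᵢ v aᵢ)`, the cup product `u ∪ v` evaluated on the fundamental class,
which is `1` for the duals of `a₁, b₁`.
-/

open scoped commutatorElement

/-- The single relator `[a₁,b₁][a₂,b₂]⋯[a_g,b_g]` of the genus-`g` surface group,
where `aᵢ` is the generator of index `2*i` and `bᵢ` the generator of index `2*i+1`. -/
def surfaceRelator (g : ℕ) : FreeGroup (Fin (2 * g)) :=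
  (List.ofFn fun i : Fin g =>
    ⁅FreeGroup.of (⟨2 * i, by have := i.2; omega⟩ : Fin (2 * g)),
     FreeGroup.of (⟨2 * i + 1, by have := i.2; omega⟩ : Fin (2 * g))⁆).prod

/-- The genus-`g` surface group `π_g = ⟨a₁,b₁,…,a_g,b_g ∣ [a₁,b₁]⋯[a_g,b_g]⟩`. -/
def SurfaceGroup (g : ℕ) : Type :=
  PresentedGroup ({surfaceRelator g} : Set (FreeGroup (Fin (2 * g))))

instance (g : ℕ) : Group (SurfaceGroup g) :=
  inferInstanceAs (Group (PresentedGroup _))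

/-- The standard generators of the genus-`g` surface group. -/
def SurfaceGroup.gen (g : ℕ) (i : Fin (2 * g)) : SurfaceGroup g :=
  PresentedGroup.of i

/-- `IA(G)`: the subgroup of `Aut(G)` of automorphisms acting trivially on the
abelianization of `G`. -/
def IA (G : Type*) [Group G] : Subgroup (MulAut G) where
  carrier := {f | ∀ x : G, Abelianization.of (f x) = Abelianization.of x}
  one_mem' := fun _ => rfl
  mul_mem' := by
    intro f h hf hh x
    exact (hf (h x)).trans (hh x)
  inv_mem' := by
    intro f hf x
    have h := hf (f⁻¹ x)
    simp only [MulAut.inv_def] at *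
    rw [MulEquiv.apply_symm_apply] at h
    exact h.symm

/-- `Inn(G)`: the group of inner automorphisms of `G`. -/
def Inn (G : Type*) [Group G] : Subgroup (MulAut G) :=
  (MulAut.conj (G := G)).range

instance Inn.normal (G : Type*) [Group G] : (Inn G).Normal := by
  constructor
  rintro x ⟨γ, rfl⟩ f
  refine ⟨f γ, ?_⟩
  ext y
  simp [MulAut.conj_apply, mul_assoc]

/-- The Heisenberg group over `R`: `⟨a, b, c⟩` is the unitriangular matrix
`[[1, a, c], [0, 1, b], [0, 0, 1]]`. -/
@[ext] structure Heis (R : Type*) where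
  a : R
  b : R
  c : R

namespace Heis

variable {R : Type*} [CommRing R]

instance : Mul (Heis R) := ⟨fun x y => ⟨x.a + y.a, x.b + y.b, x.c + y.c + x.a * y.b⟩⟩
instance : One (Heis R) := ⟨⟨0, 0, 0⟩⟩
instance : Inv (Heis R) := ⟨fun x => ⟨-x.a, -x.b, x.a * x.b - x.c⟩⟩

@[simp] lemma mul_a (x y : Heis R) : (x * y).a = x.a + y.a := rfl
@[simp] lemma mul_b (x y : Heis R) : (x * y).b = x.b + y.b := rfl
@[simp] lemma mul_c (x y : Heis R) : (x * y).c = x.c + y.c + x.a * y.b := rfl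
@[simp] lemma one_a : (1 : Heis R).a = 0 := rfl
@[simp] lemma one_b : (1 : Heis R).b = 0 := rfl
@[simp] lemma one_c : (1 : Heis R).c = 0 := rfl
@[simp] lemma inv_a (x : Heis R) : x⁻¹.a = -x.a := rfl
@[simp] lemma inv_b (x : Heis R) : x⁻¹.b = -x.b := rfl
@[simp] lemma inv_c (x : Heis R) : x⁻¹.c = x.a * x.b - x.c := rfl

instance : Group (Heis R) where
  mul_assoc x y z := by ext <;> simp <;> ring
  one_mul x := by ext <;> simp
  mul_one x := by ext <;> simp
  inv_mul_cancel x := by ext <;> simp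

def ofCenter : Multiplicative R →* Heis R where
  toFun z := ⟨0, 0, z.toAdd⟩
  map_one' := rfl
  map_mul' _ _ := by ext <;> simp

lemma ofCenter_injective : Function.Injective (ofCenter (R := R)) :=
  fun _ _ h => congrArg c h

lemma commutator_eq_ofCenter (x y : Heis R) :
    ⁅x, y⁆ = ofCenter (.ofAdd (x.a * y.b - y.a * x.b)) := by
  change x * y * x⁻¹ * y⁻¹ = _
  ext <;> simp [ofCenter]
  ring

def projA : Heis R →* Multiplicative R where
  toFun x := .ofAdd x.a
  map_one' := rfl
  map_mul' _ _ := rfl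

def projB : Heis R →* Multiplicative R where
  toFun x := .ofAdd x.b
  map_one' := rfl
  map_mul' _ _ := rfl

variable {α : Type*} (u v : FreeGroup α →* Multiplicative R)

def freeGroupLift : FreeGroup α →* Heis R :=
  FreeGroup.lift fun j => ⟨(u (.of j)).toAdd, (v (.of j)).toAdd, 0⟩

lemma freeGroupLift_a (y : FreeGroup α) : (freeGroupLift u v y).a = (u y).toAdd := by
  have h : projA.comp (freeGroupLift u v) = u :=
    FreeGroup.ext_hom _ _ fun _ => by simp [freeGroupLift, projA]
  exact congrArg Multiplicative.toAdd (DFunLike.congr_fun h y)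

lemma freeGroupLift_b (y : FreeGroup α) : (freeGroupLift u v y).b = (v y).toAdd := by
  have h : projB.comp (freeGroupLift u v) = v :=
    FreeGroup.ext_hom _ _ fun _ => by simp [freeGroupLift, projB]
  exact congrArg Multiplicative.toAdd (DFunLike.congr_fun h y)

end Heis

lemma MonoidHom.exists_comp_eq_of_ker_le_commutator {G H A : Type*} [Group G] [Group H]
    [CommGroup A] {φ : G →* H} (hφ : Function.Surjective φ) (hker : φ.ker ≤ commutator G)
    (w : G →* A) : ∃ w' : H →* A, w'.comp φ = w :=
  ⟨φ.liftOfSurjective hφ ⟨w, hker.trans (Abelianization.commutator_subset_ker w)⟩,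
    φ.liftOfRightInverse_comp _ _ _⟩

namespace SurfaceGroup

variable {g : ℕ}

def genA (i : Fin g) : SurfaceGroup g := gen g ⟨2 * i, by omega⟩

def genB (i : Fin g) : SurfaceGroup g := gen g ⟨2 * i + 1, by omega⟩

lemma prod_commutator_genA_genB : (List.ofFn fun i : Fin g => ⁅genA i, genB i⁆).prod = 1 := by
  have hrel := PresentedGroup.one_of_mem (rels := {surfaceRelator g}) rfl
  rwa [surfaceRelator, map_list_prod, List.map_ofFn] at hrel

def lift {M : Type*} [CommGroup M] (f : Fin (2 * g) → M) : SurfaceGroup g →* M :=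
  PresentedGroup.toGroup (f := f) fun r hr => by
    rw [Set.mem_singleton_iff.mp hr, surfaceRelator, map_list_prod]
    refine List.prod_eq_one fun x hx => ?_
    obtain ⟨i, rfl⟩ := List.mem_ofFn.mp (List.map_ofFn .. ▸ hx)
    rw [Function.comp_apply, map_commutatorElement]
    exact commutatorElement_eq_one_iff_mul_comm.mpr (mul_comm _ _)

@[simp] lemma lift_gen {M : Type*} [CommGroup M] (f : Fin (2 * g) → M) (i : Fin (2 * g)) :
    lift f (gen g i) = f i :=
  PresentedGroup.toGroup.of _

lemma sum_symplectic_eq_zero {R : Type*} [CommRing R] (Θ : SurfaceGroup g →* Heis R) :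
    ∑ i, ((Θ (genA i)).a * (Θ (genB i)).b - (Θ (genB i)).a * (Θ (genA i)).b) = 0 := by
  have h := congrArg Θ (prod_commutator_genA_genB (g := g))
  have hcomm : Θ ∘ (fun i => ⁅genA i, genB i⁆) = Heis.ofCenter ∘ fun i => .ofAdd
      ((Θ (genA i)).a * (Θ (genB i)).b - (Θ (genB i)).a * (Θ (genA i)).b) := by
    ext1 i
    simp only [Function.comp_apply, map_commutatorElement, Heis.commutator_eq_ofCenter]
  rw [map_list_prod, List.map_ofFn, hcomm, ← List.map_ofFn, ← map_list_prod, List.prod_ofFn,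
    ← ofAdd_sum, map_one, ← map_one Heis.ofCenter] at h
  exact Multiplicative.ofAdd.injective (Heis.ofCenter_injective h)

end SurfaceGroup

/-- For `g ≥ 1` and any surjection `φ : π_g → F_h` onto a free group of finite
rank, some element of `ker φ` is homologically nontrivial, i.e. has nonzero
image in the abelianization of `π_g`. -/
theorem kernel_contains_homologically_nontrivial (g h : ℕ) (hg : 1 ≤ g)
    (φ : SurfaceGroup g →* FreeGroup (Fin h)) (hφ : Function.Surjective φ) :
    ∃ b ∈ φ.ker, Abelianization.of b ≠ 1 := by
  have : NeZero g := ⟨by omega⟩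
  by_contra! htrivial
  have hker : φ.ker ≤ commutator _ := fun b hb =>
    Abelianization.ker_of (G := SurfaceGroup g) ▸ htrivial b hb
  let dual (n : ℕ) : SurfaceGroup g →* Multiplicative ℤ :=
    SurfaceGroup.lift fun j => .ofAdd (if (j : ℕ) = n then 1 else 0)
  obtain ⟨u, hu⟩ := MonoidHom.exists_comp_eq_of_ker_le_commutator hφ hker (dual 0)
  obtain ⟨v, hv⟩ := MonoidHom.exists_comp_eq_of_ker_le_commutator hφ hker (dual 1)
  have hpair := SurfaceGroup.sum_symplectic_eq_zero ((Heis.freeGroupLift u v).comp φ)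
  simp only [MonoidHom.comp_apply, Heis.freeGroupLift_a, Heis.freeGroupLift_b,
    ← MonoidHom.comp_apply u φ, ← MonoidHom.comp_apply v φ, hu, hv] at hpair
  -- only the `i = 0` term survives, so `hpair` reads `1 = 0`
  simp [dual, SurfaceGroup.genA, SurfaceGroup.genB] at hpair
end

section
/- Let h ≥ 2 and let F be the free group of rank h. If elements g₁, g₂, …, g_h ∈ F generate F (the subgroup generated by {g₁, …, g_h} is all of F), then the commutator ⁅g₁, g₂⁆ does not lie in the third term [[F,F],F] of the lower central series of F; equivalently, the image of ⁅g₁, g₂⁆ in [F,F]/[[F,F],F] is nontrivial. (This is the final step in the proof of Lemma 3.2 of the paper: for a surjection φ onto F_h with φ(a₁), …, φ(a_h) generating F_h, one has φ([a₁,a₂]) ≠ 1 in F_h¹/F_h².) -/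
open scoped commutatorElement

/-!
Send `F` to the integral Heisenberg group, which is nilpotent of class two, so that `[[F,F],F]`
maps to `1`. Since the `gᵢ` generate `F`, their images span the abelianization `ℤ^h`, and `h`
vectors spanning `ℤ^h` form a basis (Orzech property of `ℤ`). Hence some homomorphism
`F → ℤ²` sends `g₁ ↦ (1,0)` and `g₂ ↦ (0,1)`; lifting it to the Heisenberg group along the
universal property of `F` sends `⁅g₁, g₂⁆` to the nontrivial central element `(0,0,1)`.
-/

/-- `⟨a, b, c⟩` stands for the unitriangular matrix `!![1, a, c; 0, 1, b; 0, 0, 1]`. -/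
@[ext]
structure Heisenberg (R : Type*) where
  a : R
  b : R
  c : R

namespace Heisenberg

variable {R : Type*} [CommRing R]

instance : Mul (Heisenberg R) := ⟨fun x y => ⟨x.a + y.a, x.b + y.b, x.c + y.c + x.a * y.b⟩⟩
instance : One (Heisenberg R) := ⟨⟨0, 0, 0⟩⟩
instance : Inv (Heisenberg R) := ⟨fun x => ⟨-x.a, -x.b, -x.c + x.a * x.b⟩⟩

@[simp] lemma mul_a (x y : Heisenberg R) : (x * y).a = x.a + y.a := rfl
@[simp] lemma mul_b (x y : Heisenberg R) : (x * y).b = x.b + y.b := rfl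
@[simp] lemma mul_c (x y : Heisenberg R) : (x * y).c = x.c + y.c + x.a * y.b := rfl
@[simp] lemma one_a : (1 : Heisenberg R).a = 0 := rfl
@[simp] lemma one_b : (1 : Heisenberg R).b = 0 := rfl
@[simp] lemma one_c : (1 : Heisenberg R).c = 0 := rfl
@[simp] lemma inv_a (x : Heisenberg R) : x⁻¹.a = -x.a := rfl
@[simp] lemma inv_b (x : Heisenberg R) : x⁻¹.b = -x.b := rfl
@[simp] lemma inv_c (x : Heisenberg R) : x⁻¹.c = -x.c + x.a * x.b := rfl

instance : Group (Heisenberg R) where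
  mul_assoc x y z := by ext <;> simp <;> ring
  one_mul x := by ext <;> simp
  mul_one x := by ext <;> simp
  inv_mul_cancel x := by ext <;> simp

lemma commutator_a (x y : Heisenberg R) : ⁅x, y⁆.a = 0 := by
  simp [commutatorElement_def]

lemma commutator_b (x y : Heisenberg R) : ⁅x, y⁆.b = 0 := by
  simp [commutatorElement_def]

lemma commutator_c (x y : Heisenberg R) : ⁅x, y⁆.c = x.a * y.b - y.a * x.b := by
  simp [commutatorElement_def]
  ring

lemma mem_center_of_a_eq_zero_of_b_eq_zero {z : Heisenberg R} (ha : z.a = 0) (hb : z.b = 0) :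
    z ∈ Subgroup.center (Heisenberg R) :=
  Subgroup.mem_center_iff.2 fun y => by ext <;> simp [ha, hb, add_comm]

theorem lowerCentralSeries_two_eq_bot :
    (⊤ : Subgroup (Heisenberg R)).lowerCentralSeries 2 = ⊥ := by
  apply Subgroup.lowerCentralSeries_succ_eq_bot
  rw [Subgroup.top_lowerCentralSeries_one, commutator_def, Subgroup.commutator_le]
  exact fun x _ y _ => mem_center_of_a_eq_zero_of_b_eq_zero (commutator_a x y) (commutator_b x y)

theorem commutator_notMem_lowerCentralSeries_two {G : Type*} [Group G] (φ : G →* Heisenberg R)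
    {x y : G} (hxy : (φ x).a * (φ y).b - (φ y).a * (φ x).b ≠ 0) :
    ⁅x, y⁆ ∉ (⊤ : Subgroup G).lowerCentralSeries 2 := by
  intro hmem
  have hφ : φ ⁅x, y⁆ ∈ (⊤ : Subgroup (Heisenberg R)).lowerCentralSeries 2 :=
    Subgroup.lowerCentralSeries_mono 2 le_top
      (Subgroup.map_lowerCentralSeries ⊤ φ 2 ▸ Subgroup.mem_map_of_mem φ hmem)
  rw [lowerCentralSeries_two_eq_bot, Subgroup.mem_bot, map_commutatorElement] at hφ
  exact hxy (by rw [← commutator_c, hφ, one_c])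

def toProd : Heisenberg R →* Multiplicative (R × R) where
  toFun x := Multiplicative.ofAdd (x.a, x.b)
  map_one' := rfl
  map_mul' _ _ := rfl

theorem exists_lift_freeGroup {α : Type*} (f : FreeGroup α →* Multiplicative (R × R)) :
    ∃ φ : FreeGroup α →* Heisenberg R, toProd.comp φ = f :=
  ⟨FreeGroup.lift fun i => ⟨(f (.of i)).toAdd.1, (f (.of i)).toAdd.2, 0⟩,
    FreeGroup.ext_hom _ _ fun i => by simp [toProd]⟩

end Heisenberg

open Submodule

theorem closure_range_ofAdd_eq_top_iff {ι M : Type*} [AddCommGroup M] {v : ι → M} :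
    Subgroup.closure (Set.range (Multiplicative.ofAdd ∘ v)) = ⊤ ↔ span ℤ (Set.range v) = ⊤ := by
  rw [← toAddSubgroup_eq_top, span_int_eq_addSubgroupClosure,
    ← map_eq_top_iff AddSubgroup.toSubgroup, AddSubgroup.toSubgroup_closure,
    Set.range_comp, Equiv.image_eq_preimage_symm]
  rfl

namespace FreeGroup
variable {ι : Type*}

noncomputable def toFinsupp : FreeGroup ι →* Multiplicative (ι →₀ ℤ) :=
  lift fun i => Multiplicative.ofAdd (Finsupp.single i 1)

theorem range_toFinsupp : toFinsupp (ι := ι).range = ⊤ := by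
  rw [toFinsupp, range_lift_eq_closure]
  exact closure_range_ofAdd_eq_top_iff.2 (Finsupp.basisSingleOne.span_eq)

theorem closure_image_toFinsupp_eq_top {s : Set (FreeGroup ι)} (hs : Subgroup.closure s = ⊤) :
    Subgroup.closure (toFinsupp '' s) = ⊤ := by
  rw [← MonoidHom.map_closure, hs, ← MonoidHom.range_eq_map, range_toFinsupp]

theorem exists_basis_toFinsupp_of_closure_eq_top [Fintype ι] {gs : ι → FreeGroup ι}
    (hgen : Subgroup.closure (Set.range gs) = ⊤) :
    ∃ b : Module.Basis ι ℤ (ι →₀ ℤ), ∀ i, b i = (toFinsupp (gs i)).toAdd := by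
  set v : ι → ι →₀ ℤ := fun i => (toFinsupp (gs i)).toAdd
  have hspan : span ℤ (Set.range v) = ⊤ :=
    closure_range_ofAdd_eq_top_iff.1 <| by
      rw [← closure_image_toFinsupp_eq_top hgen, ← Set.range_comp]
      rfl
  have hli : LinearIndependent ℤ v :=
    linearIndependent_of_top_le_span_of_card_eq_finrank hspan.ge
      (Module.finrank_finsupp_self (R := ℤ)).symm
  exact ⟨.mk hli hspan.ge, Module.Basis.mk_apply hli hspan.ge⟩

end FreeGroup

/-- If `g₁, …, g_h` generate the free group `F` of rank `h ≥ 2`, then the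
commutator `⁅g₁, g₂⁆` does not lie in the third term `[[F,F],F]` of the lower
central series of `F`; equivalently its image in `[F,F]/[[F,F],F]` is
nontrivial. -/
theorem commutator_of_generators_not_in_lcs_two (h : ℕ) (hh : 2 ≤ h)
    (gs : Fin h → FreeGroup (Fin h))
    (hgen : Subgroup.closure (Set.range gs) = ⊤) :
    ⁅gs ⟨0, by omega⟩, gs ⟨1, by omega⟩⁆ ∉ (⊤ : Subgroup (FreeGroup (Fin h))).lowerCentralSeries 2 := by
  set i₀ : Fin h := ⟨0, by omega⟩
  set i₁ : Fin h := ⟨1, by omega⟩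
  obtain ⟨b, hb⟩ := FreeGroup.exists_basis_toFinsupp_of_closure_eq_top hgen
  obtain ⟨φ, hφ⟩ := Heisenberg.exists_lift_freeGroup (R := ℤ)
    ((((b.coord i₀).prod (b.coord i₁)).toAddMonoidHom.toMultiplicative).comp FreeGroup.toFinsupp)
  have hφgs (i : Fin h) : (φ (gs i)).a = b.coord i₀ (b i) ∧ (φ (gs i)).b = b.coord i₁ (b i) := by
    rw [hb]
    simpa [Heisenberg.toProd] using congrArg Multiplicative.toAdd (DFunLike.congr_fun hφ (gs i))
  have hne : i₀ ≠ i₁ := by simp [i₀, i₁, Fin.ext_iff]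
  apply Heisenberg.commutator_notMem_lowerCentralSeries_two φ
  simp [hφgs, hne, hne.symm]
end
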